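/- Observable progression stays inside the Boolean closure of the subformulas: let φ be an LTLf formula over P with P = P_o ⊎ P_u. If ψ belongs to the Boolean closure of sf(φ), then for every observable assignment w_o ∈ B^{P_o}, the formula component of fpObs(ψ, w_o) also belongs to the Boolean closure of sf(φ). Consequently, for every observable word σ_o ∈ (B^{P_o})^+, the formula component of fpObs(φ, σ_o) belongs to the Boolean closure of sf(φ). -/

import Mathlib

/-- LTLf formulas over atomic propositions `P`.  `next` is the weak next `X`,
`snext` is the strong next `X[!]`, `fin` is `F`, `glob` is `G`,
`untl` is `U` and `rels` is `R`. -/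
inductive LTLf (P : Type) : Type
  | tt : LTLf P
  | ff : LTLf P
  | atom : P → LTLf P
  | not : LTLf P → LTLf P
  | and : LTLf P → LTLf P → LTLf P
  | or : LTLf P → LTLf P → LTLf P
  | next : LTLf P → LTLf P
  | snext : LTLf P → LTLf P
  | fin : LTLf P → LTLf P
  | glob : LTLf P → LTLf P
  | untl : LTLf P → LTLf P → LTLf P
  | rels : LTLf P → LTLf P → LTLf P

namespace LTLf

variable {P O U : Type}

/-- Standard LTLf satisfaction `σ, i ⊨ φ` on finite traces.  A word is a list of
Boolean assignments; positions out of range never occur in the statements. -/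
def Sat (σ : List (P → Bool)) : ℕ → LTLf P → Prop
  | _, tt => True
  | _, ff => False
  | i, atom p => (σ.getD i (fun _ => false)) p = true
  | i, not φ => ¬ Sat σ i φ
  | i, and φ ψ => Sat σ i φ ∧ Sat σ i ψ
  | i, or φ ψ => Sat σ i φ ∨ Sat σ i ψ
  | i, next φ => i + 1 = σ.length ∨ Sat σ (i + 1) φ
  | i, snext φ => i + 1 < σ.length ∧ Sat σ (i + 1) φ
  | i, fin φ => ∃ j, i ≤ j ∧ j < σ.length ∧ Sat σ j φ
  | i, glob φ => ∀ j, i ≤ j → j < σ.length → Sat σ j φ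
  | i, untl φ ψ =>
      ∃ j, i ≤ j ∧ j < σ.length ∧ Sat σ j ψ ∧ ∀ k, i ≤ k → k < j → Sat σ k φ
  | i, rels φ ψ =>
      ∀ j, i ≤ j → j < σ.length → (Sat σ j ψ ∨ ∃ k, i ≤ k ∧ k < j ∧ Sat σ k φ)

/-- Boolean connectives lifted componentwise to (formula, flag) pairs. -/
def pnot (x : LTLf P × Bool) : LTLf P × Bool := (not x.1, !x.2)

def pand (x y : LTLf P × Bool) : LTLf P × Bool := (and x.1 y.1, x.2 && y.2)

def por (x y : LTLf P × Bool) : LTLf P × Bool := (or x.1 y.1, x.2 || y.2)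

/-- Formula progression: given a formula and an assignment, return the
progressed formula together with the acceptance flag. -/
def fp (w : P → Bool) : LTLf P → LTLf P × Bool
  | tt => (tt, true)
  | ff => (ff, false)
  | atom p => if w p = true then (tt, true) else (ff, false)
  | not φ => pnot (fp w φ)
  | and φ ψ => pand (fp w φ) (fp w ψ)
  | or φ ψ => por (fp w φ) (fp w ψ)
  | next φ => (φ, true)
  | snext φ => (φ, false)
  | fin φ => por (fp w φ) (fin φ, false)
  | glob φ => pand (fp w φ) (glob φ, true)
  | untl φ ψ => por (fp w ψ) (pand (fp w φ) (untl φ ψ, false))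
  | rels φ ψ => pand (fp w ψ) (por (fp w φ) (rels φ ψ, true))

/-- Progression iterated over a nonempty word `w :: ws`. -/
def fpWord (φ : LTLf P) (w : P → Bool) : List (P → Bool) → LTLf P × Bool
  | [] => fp w φ
  | w' :: ws => fpWord (fp w φ).1 w' ws

/-- Propositional (Boolean) evaluation of a formula, treating atomic
propositions and maximal temporal subformulas as Boolean variables valued
by `v`. -/
def propEval (v : LTLf P → Bool) : LTLf P → Bool
  | tt => true
  | ff => false
  | not φ => !(propEval v φ)
  | and φ ψ => propEval v φ && propEval v ψ
  | or φ ψ => propEval v φ || propEval v ψ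
  | φ => v φ

/-- Propositional equivalence `φ ∼ ψ`. -/
def propEquiv (φ ψ : LTLf P) : Prop :=
  ∀ v : LTLf P → Bool, propEval v φ = propEval v ψ

/-- The `∼`-equivalence class `[φ]_∼` of a formula. -/
def pcls (φ : LTLf P) : Set (LTLf P) := { ψ | propEquiv φ ψ }

/-- The set of subformulas of a formula. -/
def sf : LTLf P → Set (LTLf P)
  | tt => {tt}
  | ff => {ff}
  | atom p => {atom p}
  | not φ => insert (not φ) (sf φ)
  | and φ ψ => insert (and φ ψ) (sf φ ∪ sf ψ)
  | or φ ψ => insert (or φ ψ) (sf φ ∪ sf ψ)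
  | next φ => insert (next φ) (sf φ)
  | snext φ => insert (snext φ) (sf φ)
  | fin φ => insert (fin φ) (sf φ)
  | glob φ => insert (glob φ) (sf φ)
  | untl φ ψ => insert (untl φ ψ) (sf φ ∪ sf ψ)
  | rels φ ψ => insert (rels φ ψ) (sf φ ∪ sf ψ)

/-- The Boolean closure of a set of formulas: the smallest set containing
`X ∪ {tt, ff}` and closed under `¬`, `∧`, `∨`. -/
inductive BC {P : Type} (X : Set (LTLf P)) : LTLf P → Prop
  | base {φ : LTLf P} : φ ∈ X → BC X φ
  | tt' : BC X LTLf.tt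
  | ff' : BC X LTLf.ff
  | not' {φ : LTLf P} : BC X φ → BC X (LTLf.not φ)
  | and' {φ ψ : LTLf P} : BC X φ → BC X ψ → BC X (LTLf.and φ ψ)
  | or' {φ ψ : LTLf P} : BC X φ → BC X ψ → BC X (LTLf.or φ ψ)

/-- A formula which is an atomic proposition or has a temporal operator as its
outermost connective. -/
def isAtomicOrTemporal : LTLf P → Prop
  | atom _ => True
  | next _ => True
  | snext _ => True
  | fin _ => True
  | glob _ => True
  | untl _ _ => True
  | rels _ _ => True
  | _ => False

/-- Observable progression: progress with respect to an observable assignment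
`wo ∈ B^{P_o}`, taking the (componentwise) conjunction of `fp` over all full
assignments compatible with `wo` (i.e. over all assignments of the
unobservable variables `U`). -/
noncomputable def fpObs [Fintype U] [DecidableEq U] (ψ : LTLf (O ⊕ U)) (wo : O → Bool) :
    LTLf (O ⊕ U) × Bool :=
  (((Finset.univ : Finset (U → Bool)).toList.map
      (fun wu => fp (Sum.elim wo wu) ψ)).foldr pand (tt, true))

/-- Observable progression iterated over a nonempty observable word `wo :: wos`. -/
noncomputable def fpObsWord [Fintype U] [DecidableEq U] (φ : LTLf (O ⊕ U)) (wo : O → Bool) :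
    List (O → Bool) → LTLf (O ⊕ U) × Bool
  | [] => fpObs φ wo
  | w :: ws => fpObsWord (fpObs φ wo).1 w ws

/-- The run of the belief-state construction: `runB φ σo t` is the belief state
`s_t` reached after observably progressing `φ` along the first `t` letters of `σo`. -/
noncomputable def runB [Fintype U] [DecidableEq U] (φ : LTLf (O ⊕ U)) (σo : List (O → Bool)) :
    ℕ → LTLf (O ⊕ U)
  | 0 => φ
  | t + 1 => (fpObs (runB φ σo t) (σo.getD t (fun _ => false))).1

end LTLf


/-!
Progressing a formula `ψ` yields a Boolean combination of `tt`, `ff` and subformulas of `ψ`: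
the temporal subformulas `F a`, `G a`, `a U b`, `a R b` are re-emitted unchanged and a next
operator releases its argument. So if `X` is closed under subformulas, its Boolean closure is
stable under `fp`, since `fp` commutes with the Boolean connectives. Observable progression is a
finite conjunction of progressions, and the word version iterates it.
-/

namespace LTLf

variable {P : Type}

theorem mem_sf_self (φ : LTLf P) : φ ∈ sf φ := by
  cases φ <;> simp [sf]

theorem sf_subset_of_mem {φ ψ : LTLf P} (h : ψ ∈ sf φ) : sf ψ ⊆ sf φ := by
  induction φ with
  | tt | ff | atom => simp only [sf, Set.mem_singleton_iff] at h; subst h; rfl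
  | not a ih | next a ih | snext a ih | fin a ih | glob a ih =>
    rcases h with rfl | h
    · rfl
    · exact (ih h).trans (Set.subset_insert _ _)
  | and a b iha ihb | or a b iha ihb | untl a b iha ihb | rels a b iha ihb =>
    rcases h with rfl | h | h
    · rfl
    · exact (iha h).trans (Set.subset_union_left.trans (Set.subset_insert _ _))
    · exact (ihb h).trans (Set.subset_union_right.trans (Set.subset_insert _ _))

def SubformulaClosed (X : Set (LTLf P)) : Prop :=
  ∀ ψ ∈ X, sf ψ ⊆ X

theorem subformulaClosed_sf (φ : LTLf P) : SubformulaClosed (sf φ) :=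
  fun _ => sf_subset_of_mem

theorem BC.fp_fst_of_sf_subset {X : Set (LTLf P)} (w : P → Bool) {ψ : LTLf P}
    (h : sf ψ ⊆ X) : BC X (fp w ψ).1 := by
  induction ψ with
  | tt => exact .tt'
  | ff => exact .ff'
  | atom p =>
    simp only [fp]
    split
    · exact .tt'
    · exact .ff'
  | not a iha =>
    simp only [sf, Set.insert_subset_iff] at h
    exact .not' (iha h.2)
  | and a b iha ihb =>
    simp only [sf, Set.insert_subset_iff, Set.union_subset_iff] at h
    exact .and' (iha h.2.1) (ihb h.2.2)
  | or a b iha ihb =>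
    simp only [sf, Set.insert_subset_iff, Set.union_subset_iff] at h
    exact .or' (iha h.2.1) (ihb h.2.2)
  | next a | snext a =>
    simp only [sf, Set.insert_subset_iff] at h
    exact .base (h.2 (mem_sf_self a))
  | fin a iha =>
    simp only [sf, Set.insert_subset_iff] at h
    exact .or' (iha h.2) (.base h.1)
  | glob a iha =>
    simp only [sf, Set.insert_subset_iff] at h
    exact .and' (iha h.2) (.base h.1)
  | untl a b iha ihb =>
    simp only [sf, Set.insert_subset_iff, Set.union_subset_iff] at h
    exact .or' (ihb h.2.2) (.and' (iha h.2.1) (.base h.1))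
  | rels a b iha ihb =>
    simp only [sf, Set.insert_subset_iff, Set.union_subset_iff] at h
    exact .and' (ihb h.2.2) (.or' (iha h.2.1) (.base h.1))

theorem BC.fp_fst {X : Set (LTLf P)} (hX : SubformulaClosed X) (w : P → Bool) {ψ : LTLf P}
    (h : BC X ψ) : BC X (fp w ψ).1 := by
  induction h with
  | base hψ => exact fp_fst_of_sf_subset w (hX _ hψ)
  | tt' => exact .tt'
  | ff' => exact .ff'
  | not' _ ih => exact .not' ih
  | and' _ _ ih₁ ih₂ => exact .and' ih₁ ih₂
  | or' _ _ ih₁ ih₂ => exact .or' ih₁ ih₂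

theorem BC.foldr_pand_fst {X : Set (LTLf P)} {l : List (LTLf P × Bool)}
    (h : ∀ x ∈ l, BC X x.1) : BC X (l.foldr pand (tt, true)).1 := by
  induction l with
  | nil => exact .tt'
  | cons a l ih =>
    exact .and' (h a List.mem_cons_self) (ih fun x hx => h x (List.mem_cons_of_mem _ hx))

variable {O U : Type} [Fintype U] [DecidableEq U]

theorem BC.fpObs_fst {X : Set (LTLf (O ⊕ U))} (hX : SubformulaClosed X) {ψ : LTLf (O ⊕ U)}
    (h : BC X ψ) (wo : O → Bool) : BC X (fpObs ψ wo).1 := by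
  refine foldr_pand_fst fun x hx => ?_
  obtain ⟨wu, -, rfl⟩ := List.mem_map.mp hx
  exact h.fp_fst hX _

theorem BC.fpObsWord_fst {X : Set (LTLf (O ⊕ U))} (hX : SubformulaClosed X)
    {ψ : LTLf (O ⊕ U)} (h : BC X ψ) (wo : O → Bool) (wos : List (O → Bool)) :
    BC X (fpObsWord ψ wo wos).1 := by
  induction wos generalizing ψ wo with
  | nil => exact h.fpObs_fst hX wo
  | cons w ws ih => exact ih (h.fpObs_fst hX wo) w

end LTLf

theorem fpObs_mem_booleanClosure_general {O U : Type}
    [Fintype U] [DecidableEq U] (φ : LTLf (O ⊕ U)) :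
    (∀ ψ : LTLf (O ⊕ U), LTLf.BC (LTLf.sf φ) ψ →
        ∀ wo : O → Bool, LTLf.BC (LTLf.sf φ) (LTLf.fpObs ψ wo).1) ∧
      (∀ (wo : O → Bool) (wos : List (O → Bool)),
        LTLf.BC (LTLf.sf φ) (LTLf.fpObsWord φ wo wos).1) :=
  ⟨fun _ h wo => h.fpObs_fst (LTLf.subformulaClosed_sf φ) wo,
    (LTLf.BC.base (LTLf.mem_sf_self φ)).fpObsWord_fst (LTLf.subformulaClosed_sf φ)⟩

/-- observable progression stays inside the Boolean closure of
the subformulas of `φ`. -/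
theorem fpObs_mem_booleanClosure {O U : Type} [Fintype O] [DecidableEq O]
    [Fintype U] [DecidableEq U] (φ : LTLf (O ⊕ U)) :
    (∀ ψ : LTLf (O ⊕ U), LTLf.BC (LTLf.sf φ) ψ →
        ∀ wo : O → Bool, LTLf.BC (LTLf.sf φ) (LTLf.fpObs ψ wo).1) ∧
      (∀ (wo : O → Bool) (wos : List (O → Bool)),
        LTLf.BC (LTLf.sf φ) (LTLf.fpObsWord φ wo wos).1) :=
  fpObs_mem_booleanClosure_general φ
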